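/- arXiv:math/0206224 — 4 statements merged into one kernel-verified Lean document; each statement's English description precedes it below -/
import Mathlib

section
/- Let r : ℝ → ℂ be measurable with ‖r‖_∞ ≤ ρ < 1 and r ∈ L²(ℝ), and let δ₊(z) and δ₋(z) be the boundary values from the upper and lower half-planes of δ(w) = exp((1/(2πi)) ∫_{−∞}^{z₀} log(1−|r(s)|²)/(s−w) ds). Then |δ₊(z)·δ₋(z)| = 1 for all real z. -/
open MeasureTheory Filter Real

lemma abs_mul_conj_aux (f : ℝ → ℝ) (z₀ : ℝ) (w : ℂ) :
    ‖(Complex.exp ((1 / (2 * (π : ℂ) * Complex.I)) *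
          ∫ s in Set.Iio z₀, ((f s : ℂ)) / ((s : ℂ) - w)) *
        Complex.exp ((1 / (2 * (π : ℂ) * Complex.I)) *
          ∫ s in Set.Iio z₀, ((f s : ℂ)) / ((s : ℂ) - (starRingEnd ℂ) w)))‖ = 1 := by
  set c : ℂ := 1 / (2 * (π : ℂ) * Complex.I) with hc
  set I₁ : ℂ := ∫ s in Set.Iio z₀, ((f s : ℂ)) / ((s : ℂ) - w) with hI1
  have hconj : (∫ s in Set.Iio z₀, ((f s : ℂ)) / ((s : ℂ) - (starRingEnd ℂ) w))
      = (starRingEnd ℂ) I₁ := by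
    rw [hI1, ← integral_conj]
    congr 1
    funext s
    simp [map_div₀, map_sub, Complex.conj_ofReal]
  have hcc : (starRingEnd ℂ) c = -c := by
    rw [hc]
    rw [map_div₀, map_one, map_mul, map_mul, Complex.conj_I]
    have : ((starRingEnd ℂ) 2 : ℂ) = 2 := Complex.conj_ofNat 2
    rw [this, Complex.conj_ofReal]
    ring
  rw [hconj, ← Complex.exp_add, Complex.norm_exp]
  have : c * I₁ + c * (starRingEnd ℂ) I₁ = c * I₁ - (starRingEnd ℂ) (c * I₁) := by
    rw [map_mul, hcc]; ring
  rw [this, Complex.sub_conj]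
  simp

/-- Let `r : ℝ → ℂ` be measurable with `‖r‖_∞ ≤ ρ < 1` and `r ∈ L²(ℝ)`.  Let
`δ(w) = exp((1/(2πi)) ∫_{−∞}^{z₀} log(1−|r(s)|²)/(s−w) ds)` and let `δ₊(z)`, `δ₋(z)` be its
boundary values on `ℝ` from the upper and lower half-planes.  Then `|δ₊(z)·δ₋(z)| = 1`
for all real `z`. -/
theorem stmt_8 (r : ℝ → ℂ) (ρ z₀ : ℝ) (hmeas : Measurable r)
    (hL2 : MemLp r 2 (volume : Measure ℝ))
    (hρ : ∀ s, ‖r s‖ ≤ ρ) (hρ1 : ρ < 1)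
    (δ : ℂ → ℂ)
    (hδ : ∀ w : ℂ, δ w =
      Complex.exp ((1 / (2 * (π : ℂ) * Complex.I)) *
        ∫ s in Set.Iio z₀, ((Real.log (1 - ‖r s‖ ^ 2) : ℂ)) / ((s : ℂ) - w))) :
    ∀ z : ℝ, ∀ dp dm : ℂ,
      Tendsto (fun ε : ℝ => δ ((z : ℂ) + (ε : ℂ) * Complex.I))
        (nhdsWithin 0 (Set.Ioi 0)) (nhds dp) →
      Tendsto (fun ε : ℝ => δ ((z : ℂ) - (ε : ℂ) * Complex.I))
        (nhdsWithin 0 (Set.Ioi 0)) (nhds dm) →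
      ‖dp * dm‖ = 1 := by
  intro z dp dm hp hm
  have key : ∀ ε : ℝ, ‖
      (δ ((z : ℂ) + (ε : ℂ) * Complex.I) * δ ((z : ℂ) - (ε : ℂ) * Complex.I))‖ = 1 := by
    intro ε
    have hw : (z : ℂ) - (ε : ℂ) * Complex.I = (starRingEnd ℂ) ((z : ℂ) + (ε : ℂ) * Complex.I) := by
      simp [map_add, map_mul, Complex.conj_I, Complex.conj_ofReal]; ring
    rw [hδ, hδ, hw]
    exact abs_mul_conj_aux (fun s => Real.log (1 - ‖r s‖ ^ 2)) z₀ _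
  have h1 : Tendsto (fun ε : ℝ => ‖
      (δ ((z : ℂ) + (ε : ℂ) * Complex.I) * δ ((z : ℂ) - (ε : ℂ) * Complex.I))‖)
      (nhdsWithin 0 (Set.Ioi 0)) (nhds (‖dp * dm‖)) :=
    (continuous_norm.continuousAt.tendsto.comp (hp.mul hm))
  have h2 : Tendsto (fun ε : ℝ => ‖
      (δ ((z : ℂ) + (ε : ℂ) * Complex.I) * δ ((z : ℂ) - (ε : ℂ) * Complex.I))‖)
      (nhdsWithin 0 (Set.Ioi 0)) (nhds 1) := by
    simp only [key]; exact tendsto_const_nhds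
  exact tendsto_nhds_unique h1 h2
end

section
/- Let r ∈ L²(ℝ) ∩ L^∞(ℝ) with ‖r‖_∞ ≤ ρ < 1, z₀ ∈ ℝ, and define δ(z) = exp((1/(2πi)) ∫_{−∞}^{z₀} log(1−|r(s)|²)/(s−z) ds) for z ∉ (−∞, z₀]. Then (1−ρ²)^{1/2} ≤ |δ(z)| ≤ (1−ρ²)^{−1/2} for all such z. -/
/-!
Since `|exp w| = exp (Re w)`, we have `|δ(z)| = exp ((2π)⁻¹ ∫ log (1 - |r s|²) Im (s - z)⁻¹ ds)`.
The kernel `Im (s - z)⁻¹ = Im z / |s - z|²` is a Poisson kernel, whose absolute value has total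
mass `π` on the line, and `|log (1 - |r s|²)| ≤ -log (1 - ρ²)`; so the exponent lies between
`±log (1 - ρ²) / 2`.
-/

open MeasureTheory Real

lemma im_inv_ofReal_sub (z : ℂ) (s : ℝ) :
    ((s : ℂ) - z)⁻¹.im = z.im / ((s - z.re) ^ 2 + z.im ^ 2) := by
  rw [Complex.inv_im, Complex.normSq_apply]
  simp only [Complex.sub_re, Complex.sub_im, Complex.ofReal_re, Complex.ofReal_im]
  ring

lemma abs_im_inv_ofReal_sub_eq_of_im_ne_zero {z : ℂ} (hz : z.im ≠ 0) :
    (fun s : ℝ => |((s : ℂ) - z)⁻¹.im|)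
      = fun s => |z.im|⁻¹ * (1 + ((s - z.re) / z.im) ^ 2)⁻¹ := by
  funext s
  have : 0 < |z.im| := abs_pos.mpr hz
  have hden : 0 ≤ (s - z.re) ^ 2 + z.im ^ 2 := by positivity
  rw [im_inv_ofReal_sub, abs_div, abs_of_nonneg hden, div_pow, ← sq_abs z.im]
  field_simp
  ring

lemma integrable_abs_im_inv_ofReal_sub (z : ℂ) :
    Integrable fun s : ℝ => |((s : ℂ) - z)⁻¹.im| := by
  rcases eq_or_ne z.im 0 with hz | hz
  · simp [hz]
  · rw [abs_im_inv_ofReal_sub_eq_of_im_ne_zero hz]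
    exact ((integrable_inv_one_add_sq.comp_div hz).comp_sub_right z.re).const_mul _

lemma integral_abs_im_inv_ofReal_sub_le (z : ℂ) :
    ∫ s : ℝ, |((s : ℂ) - z)⁻¹.im| ≤ π := by
  rcases eq_or_ne z.im 0 with hz | hz
  · simp [hz, pi_pos.le]
  · rw [abs_im_inv_ofReal_sub_eq_of_im_ne_zero hz, integral_const_mul,
      integral_sub_right_eq_self (fun u => (1 + (u / z.im) ^ 2)⁻¹),
      Measure.integral_comp_div (fun t => (1 + t ^ 2)⁻¹), integral_univ_inv_one_add_sq,
      smul_eq_mul, inv_mul_cancel_left₀ (abs_ne_zero.mpr hz)]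

lemma abs_im_setIntegral_div_ofReal_sub_le {g : ℝ → ℝ} {M : ℝ} (hg : ∀ s, |g s| ≤ M)
    (S : Set ℝ) (z : ℂ) :
    |(∫ s in S, (g s : ℂ) / ((s : ℂ) - z)).im| ≤ M * π := by
  have hM : 0 ≤ M := (abs_nonneg _).trans (hg 0)
  by_cases hint : IntegrableOn (fun s : ℝ => (g s : ℂ) / ((s : ℂ) - z)) S
  · have him : ∀ s : ℝ, ((g s : ℂ) / ((s : ℂ) - z)).im = g s * ((s : ℂ) - z)⁻¹.im := fun s => by
      rw [div_eq_mul_inv, Complex.im_ofReal_mul]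
    have him_integral := integral_im hint
    simp only [RCLike.im_eq_complex_im] at him_integral
    rw [← him_integral]
    simp only [him]
    calc |∫ s in S, g s * ((s : ℂ) - z)⁻¹.im|
        ≤ ∫ s in S, M * |((s : ℂ) - z)⁻¹.im| :=
          norm_integral_le_of_norm_le
            ((integrable_abs_im_inv_ofReal_sub z).const_mul M).integrableOn
            (.of_forall fun s => by
              rw [Real.norm_eq_abs, abs_mul]
              exact mul_le_mul_of_nonneg_right (hg s) (abs_nonneg _))
      _ ≤ M * ∫ s : ℝ, |((s : ℂ) - z)⁻¹.im| := by
          rw [integral_const_mul]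
          exact mul_le_mul_of_nonneg_left (setIntegral_le_integral
            (integrable_abs_im_inv_ofReal_sub z) (.of_forall fun s => abs_nonneg _)) hM
      _ ≤ M * π := mul_le_mul_of_nonneg_left (integral_abs_im_inv_ofReal_sub_le z) hM
  · rw [integral_undef hint, Complex.zero_im, abs_zero]
    exact mul_nonneg hM pi_pos.le

lemma abs_log_one_sub_le {t τ : ℝ} (ht : 0 ≤ t) (htτ : t ≤ τ) (hτ : τ < 1) :
    |log (1 - t)| ≤ -log (1 - τ) := by
  rw [abs_of_nonpos (log_nonpos (by linarith) (by linarith)), neg_le_neg_iff]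
  exact log_le_log (by linarith) (by linarith)

lemma norm_exp_one_div_two_pi_I_mul (w : ℂ) :
    ‖Complex.exp (1 / (2 * (π : ℂ) * Complex.I) * w)‖ = exp (w.im / (2 * π)) := by
  rw [Complex.norm_exp, one_div, mul_inv, Complex.inv_I, mul_neg, neg_mul, mul_comm, ← mul_assoc]
  simp
  field_simp

theorem stmt_9_general (r : ℝ → ℂ) (ρ z₀ : ℝ)
    (hρ : ∀ s, ‖r s‖ ≤ ρ) (hρ1 : ρ < 1)
    (δ : ℂ → ℂ)
    (hδ : ∀ w : ℂ, δ w =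
      Complex.exp ((1 / (2 * (π : ℂ) * Complex.I)) *
        ∫ s in Set.Iio z₀, ((Real.log (1 - ‖r s‖ ^ 2) : ℂ)) / ((s : ℂ) - w))) :
    ∀ z : ℂ, z ∉ (fun x : ℝ => (x : ℂ)) '' Set.Iic z₀ →
      Real.sqrt (1 - ρ ^ 2) ≤ ‖δ z‖ ∧
        ‖δ z‖ ≤ (Real.sqrt (1 - ρ ^ 2))⁻¹ := by
  intro z _
  have hρ0 : 0 ≤ ρ := (norm_nonneg _).trans (hρ 0)
  have hlog : ∀ s, |log (1 - ‖r s‖ ^ 2)| ≤ -log (1 - ρ ^ 2) := fun s =>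
    abs_log_one_sub_le (sq_nonneg _) (pow_le_pow_left₀ (norm_nonneg _) (hρ s) 2)
      (by nlinarith)
  have him := abs_le.mp (abs_im_setIntegral_div_ofReal_sub_le hlog (Set.Iio z₀) z)
  have hsqrt : √(1 - ρ ^ 2) = exp (log (1 - ρ ^ 2) / 2) := by
    rw [sqrt_eq_rpow, rpow_def_of_pos (by nlinarith)]
    ring_nf
  rw [hδ z, norm_exp_one_div_two_pi_I_mul, hsqrt, ← exp_neg]
  constructor <;> rw [exp_le_exp]
  · rw [le_div_iff₀ (by positivity)]
    linarith
  · rw [div_le_iff₀ (by positivity)]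
    linarith

/-- Let `r ∈ L²(ℝ) ∩ L^∞(ℝ)` with `‖r‖_∞ ≤ ρ < 1`, `z₀ ∈ ℝ`, and
`δ(z) = exp((1/(2πi)) ∫_{−∞}^{z₀} log(1−|r(s)|²)/(s−z) ds)` for `z ∉ (−∞, z₀]`.
Then `(1−ρ²)^{1/2} ≤ |δ(z)| ≤ (1−ρ²)^{−1/2}`. -/
theorem stmt_9 (r : ℝ → ℂ) (ρ z₀ : ℝ) (hmeas : Measurable r)
    (hL2 : MemLp r 2 (volume : Measure ℝ))
    (hρ : ∀ s, ‖r s‖ ≤ ρ) (hρ1 : ρ < 1)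
    (δ : ℂ → ℂ)
    (hδ : ∀ w : ℂ, δ w =
      Complex.exp ((1 / (2 * (π : ℂ) * Complex.I)) *
        ∫ s in Set.Iio z₀, ((Real.log (1 - ‖r s‖ ^ 2) : ℂ)) / ((s : ℂ) - w))) :
    ∀ z : ℂ, z ∉ (fun x : ℝ => (x : ℂ)) '' Set.Iic z₀ →
      Real.sqrt (1 - ρ ^ 2) ≤ ‖δ z‖ ∧
        ‖δ z‖ ≤ (Real.sqrt (1 - ρ ^ 2))⁻¹ :=
  stmt_9_general r ρ z₀ hρ hρ1 δ hδ
end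

section
/- Let f : ℝ → ℂ be in H¹(ℝ) (f and f′ in L²) with f(0) = 0. Then ∫_{−∞}^0 |f(x)/x|² dx ≤ 4 ∫_{−∞}^0 |f′(x)|² dx (Hardy's inequality on the half-line applied to f − f(0)). -/
/-!
For `a ≤ b < 0`, integrate `(-‖f‖² / x)' = ‖f‖² / x² - 2 ⟪f, f'⟫ / x` over `(a, b]`, bounding
`⟪f, f'⟫ / x ≤ (‖f‖ / |x|) ‖f'‖` and dropping the boundary term at `a`, which has a sign. By
Cauchy–Schwarz, `A = ∫_a^b ‖f‖² / x²` satisfies `A ≤ ‖f b‖² / |b| + 2 √A √(∫_a^b ‖f'‖²)`, and,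
since `f 0 = 0`, also `‖f b‖² / |b| ≤ ∫_b^0 ‖f'‖² → 0`. Letting `a → -∞` and `b → 0⁻` gives
`S ≤ 2 √S √R` for `S = ∫_{-∞}^0 ‖f‖² / x²` and `R = ∫_{-∞}^0 ‖f'‖²`, hence `S ≤ 4 R`.
-/

open MeasureTheory Set Filter Topology

theorem integral_mul_le_sqrt_mul_sqrt {α : Type*} [MeasurableSpace α] {μ : Measure α}
    {u v : α → ℝ} (hu : MemLp u 2 μ) (hv : MemLp v 2 μ) (hu0 : 0 ≤ᵐ[μ] u) (hv0 : 0 ≤ᵐ[μ] v) :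
    ∫ x, u x * v x ∂μ ≤ √(∫ x, u x ^ 2 ∂μ) * √(∫ x, v x ^ 2 ∂μ) := by
  simpa [Real.sqrt_eq_rpow] using integral_mul_le_Lp_mul_Lq_of_nonneg
    Real.HolderConjugate.two_two hu0 hv0 (by simpa using hu) (by simpa using hv)

theorem le_four_mul_of_le_two_mul_sqrt_mul_sqrt {S R : ℝ} (hS : 0 ≤ S) (hR : 0 ≤ R)
    (h : S ≤ 2 * √S * √R) : S ≤ 4 * R := by
  nlinarith [Real.sq_sqrt hS, Real.sq_sqrt hR, Real.sqrt_nonneg S, Real.sqrt_nonneg R]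

theorem tendsto_setIntegral_Ioc_zero {E : Type*} [NormedAddCommGroup E] [NormedSpace ℝ E]
    {g : ℝ → E} (hg : Integrable g) :
    Tendsto (fun b => ∫ x in Ioc b 0, g x) (𝓝[<] 0) (𝓝 0) := by
  have h := ((intervalIntegral.continuous_primitive (fun _ _ => hg.intervalIntegrable) 0).tendsto
    0).neg.mono_left (nhdsWithin_le_nhds (s := Iio 0))
  simp only [intervalIntegral.integral_same, neg_zero] at h
  refine h.congr' ?_
  filter_upwards [self_mem_nhdsWithin] with b hb
  rw [← intervalIntegral.integral_symm, intervalIntegral.integral_of_le (le_of_lt hb)]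

theorem tendsto_setIntegral_Ioc_inv_self {E : Type*} [NormedAddCommGroup E] [NormedSpace ℝ E]
    {g : ℝ → E} (hg : IntegrableOn g (Iio 0)) :
    Tendsto (fun b => ∫ x in Ioc b⁻¹ b, g x) (𝓝[<] 0) (𝓝 (∫ x in Iio 0, g x)) := by
  have hcover : AECover (volume.restrict (Iio 0)) (𝓝[<] 0) fun b : ℝ => Ioc b⁻¹ b :=
    aecover_restrict_of_ae_imp measurableSet_Iio
      (ae_of_all _ fun x (hx : x < 0) =>
        (tendsto_inv_nhdsLT_zero.eventually (eventually_lt_atBot x)).and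
          (eventually_nhdsWithin_of_eventually_nhds (eventually_ge_nhds hx)))
      fun _ => measurableSet_Ioc
  refine (hcover.integral_tendsto_of_countably_generated hg).congr' ?_
  filter_upwards [self_mem_nhdsWithin] with b (hb : b < 0)
  rw [Measure.restrict_restrict measurableSet_Ioc,
    inter_eq_left.2 (Ioc_subset_Iic_self.trans (Iic_subset_Iio.2 hb))]

theorem sq_norm_sub_le_mul_integral_sq_norm_deriv {E : Type*} [NormedAddCommGroup E]
    [NormedSpace ℝ E] [CompleteSpace E] {f f' : ℝ → E} {a b : ℝ}
    (hf : ∀ x, HasDerivAt f (f' x) x) (hf' : MemLp f' 2 (volume.restrict (Ioc a b)))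
    (hab : a ≤ b) :
    ‖f b - f a‖ ^ 2 ≤ (b - a) * ∫ x in Ioc a b, ‖f' x‖ ^ 2 := by
  have hint : IntervalIntegrable f' volume a b :=
    (intervalIntegrable_iff_integrableOn_Ioc_of_le hab).2 (hf'.integrable one_le_two)
  have hCS := integral_mul_le_sqrt_mul_sqrt hf'.norm (memLp_const 1)
    (ae_of_all _ fun _ => norm_nonneg _) (ae_of_all _ fun _ => zero_le_one)
  simp only [mul_one, one_pow, setIntegral_const, Real.volume_real_Ioc_of_le hab,
    smul_eq_mul] at hCS
  calc ‖f b - f a‖ ^ 2 = ‖∫ x in Ioc a b, f' x‖ ^ 2 := by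
        rw [← intervalIntegral.integral_of_le hab,
          intervalIntegral.integral_eq_sub_of_hasDerivAt (fun x _ => hf x) hint]
    _ ≤ (√(∫ x in Ioc a b, ‖f' x‖ ^ 2) * √(b - a)) ^ 2 := by
        gcongr
        exact (norm_integral_le_integral_norm _).trans hCS
    _ = (b - a) * ∫ x in Ioc a b, ‖f' x‖ ^ 2 := by
        rw [mul_pow, Real.sq_sqrt (setIntegral_nonneg measurableSet_Ioc fun _ _ => sq_nonneg _),
          Real.sq_sqrt (sub_nonneg.2 hab), mul_comm]

variable {E : Type*} [NormedAddCommGroup E] [InnerProductSpace ℝ E] {f f' : ℝ → E} {a b : ℝ}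

theorem hasDerivAt_neg_sq_norm_div {e : E} {t : ℝ} (hf : HasDerivAt f e t) (ht : t ≠ 0) :
    HasDerivAt (fun y => -‖f y‖ ^ 2 / y) ((‖f t‖ / |t|) ^ 2 - 2 * inner ℝ (f t) e / t) t := by
  refine (hf.norm_sq.neg.div (hasDerivAt_id t) ht).congr_deriv ?_
  simp only [div_pow, sq_abs, id, mul_one, Pi.neg_apply]
  field_simp
  ring

theorem integral_Ioc_sq_norm_div_abs_le (hf : ∀ x, HasDerivAt f (f' x) x)
    (hf' : MemLp f' 2 (volume.restrict (Ioc a b))) (hab : a ≤ b) (hb : b < 0) :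
    ∫ x in Ioc a b, (‖f x‖ / |x|) ^ 2 ≤ ‖f b‖ ^ 2 / -b +
      2 * √(∫ x in Ioc a b, (‖f x‖ / |x|) ^ 2) * √(∫ x in Ioc a b, ‖f' x‖ ^ 2) := by
  have hne : ∀ x ∈ Icc a b, x ≠ 0 := fun x hx => (hx.2.trans_lt hb).ne
  set u : ℝ → ℝ := fun x => ‖f x‖ / |x|
  have hderiv x (hx : x ∈ Icc a b) := hasDerivAt_neg_sq_norm_div (hf x) (hne x hx)
  have hu_cont : ContinuousOn u (Icc a b) :=
    (continuous_iff_continuousAt.2 fun x => (hf x).continuousAt).norm.continuousOn.div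
      continuous_abs.continuousOn fun x hx => abs_ne_zero.2 (hne x hx)
  have hu2 : IntegrableOn (fun x => u x ^ 2) (Ioc a b) :=
    (hu_cont.pow 2).integrableOn_Icc.mono_set Ioc_subset_Icc_self
  have hu : MemLp u 2 (volume.restrict (Ioc a b)) :=
    (memLp_two_iff_integrable_sq
      ((hu_cont.mono Ioc_subset_Icc_self).aestronglyMeasurable measurableSet_Ioc)).2 hu2
  have huf' : IntegrableOn (fun x => u x * ‖f' x‖) (Ioc a b) := hu.integrable_mul hf'.norm
  have hftc : ∫ x in a..b, (u x ^ 2 - 2 * (u x * ‖f' x‖)) ≤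
      -‖f b‖ ^ 2 / b - -‖f a‖ ^ 2 / a := by
    refine intervalIntegral.integral_le_sub_of_hasDeriv_right_of_le hab
      (fun x hx => (hderiv x hx).continuousAt.continuousWithinAt)
      (fun x hx => (hderiv x (Ioo_subset_Icc_self hx)).hasDerivWithinAt)
      (integrableOn_Icc_iff_integrableOn_Ioc (by finiteness) |>.2
        (hu2.sub (huf'.const_mul 2))) fun x _ => ?_
    have : inner ℝ (f x) (f' x) / x ≤ u x * ‖f' x‖ :=
      calc inner ℝ (f x) (f' x) / x ≤ |inner ℝ (f x) (f' x)| / |x| := by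
            rw [← abs_div]; exact le_abs_self _
        _ ≤ ‖f x‖ * ‖f' x‖ / |x| := by gcongr; exact abs_real_inner_le_norm _ _
        _ = u x * ‖f' x‖ := by ring
    linarith [mul_div_assoc 2 (inner ℝ (f x) (f' x)) x]
  have hCS := integral_mul_le_sqrt_mul_sqrt hu hf'.norm
    (ae_of_all _ fun x => by positivity) (ae_of_all _ fun x => norm_nonneg _)
  have hfa : 0 ≤ -‖f a‖ ^ 2 / a :=
    div_nonneg_of_nonpos (neg_nonpos.2 (sq_nonneg _)) (hab.trans hb.le)
  rw [intervalIntegral.integral_of_le hab, integral_sub hu2 (huf'.const_mul 2),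
    integral_const_mul] at hftc
  simp only [u] at hftc hCS
  rw [div_neg, ← neg_div]
  linarith

theorem integral_Iio_sq_norm_div_abs_le_four_mul [CompleteSpace E]
    (hf : ∀ x, HasDerivAt f (f' x) x) (hf' : MemLp f' 2) (h0 : f 0 = 0) :
    ∫ x in Iio 0, (‖f x‖ / |x|) ^ 2 ≤ 4 * ∫ x in Iio 0, ‖f' x‖ ^ 2 := by
  set R := ∫ x in Iio 0, ‖f' x‖ ^ 2
  have hR : 0 ≤ R := setIntegral_nonneg measurableSet_Iio fun _ _ => sq_nonneg _
  by_cases hint : IntegrableOn (fun x => (‖f x‖ / |x|) ^ 2) (Iio 0)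
  swap
  · -- the Bochner integral of a non-integrable function is `0`
    rw [integral_undef hint]; positivity
  set S := ∫ x in Iio 0, (‖f x‖ / |x|) ^ 2
  have hS : 0 ≤ S := setIntegral_nonneg measurableSet_Iio fun _ _ => sq_nonneg _
  have hf'2 : Integrable fun x => ‖f' x‖ ^ 2 := (memLp_two_iff_integrable_sq_norm hf'.1).1 hf'
  have htrunc : ∀ᶠ b in 𝓝[<] 0, ∫ x in Ioc b⁻¹ b, (‖f x‖ / |x|) ^ 2 ≤
      (∫ x in Ioc b 0, ‖f' x‖ ^ 2) + 2 * √S * √R := by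
    filter_upwards [Ioo_mem_nhdsLT (show (-1 : ℝ) < 0 by norm_num)] with b ⟨hb1, hb⟩
    have hab : b⁻¹ ≤ b := by
      have : b⁻¹ < -1 := by
        rw [inv_lt_of_neg hb (by norm_num)]; simpa using hb1
      linarith
    have hsub : Ioc b⁻¹ b ⊆ Iio 0 := Ioc_subset_Iic_self.trans (Iic_subset_Iio.2 hb)
    have hboundary := sq_norm_sub_le_mul_integral_sq_norm_deriv hf (hf'.restrict _) hb.le
    rw [h0, zero_sub, norm_neg, zero_sub] at hboundary
    have hS' : ∫ x in Ioc b⁻¹ b, (‖f x‖ / |x|) ^ 2 ≤ S :=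
      setIntegral_mono_set hint (ae_of_all _ fun _ => sq_nonneg _) hsub.eventuallyLE
    have hR' : ∫ x in Ioc b⁻¹ b, ‖f' x‖ ^ 2 ≤ R :=
      setIntegral_mono_set hf'2.integrableOn (ae_of_all _ fun _ => sq_nonneg _) hsub.eventuallyLE
    calc ∫ x in Ioc b⁻¹ b, (‖f x‖ / |x|) ^ 2
        ≤ ‖f b‖ ^ 2 / -b + 2 * √(∫ x in Ioc b⁻¹ b, (‖f x‖ / |x|) ^ 2) *
            √(∫ x in Ioc b⁻¹ b, ‖f' x‖ ^ 2) :=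
          integral_Ioc_sq_norm_div_abs_le hf (hf'.restrict _) hab hb
      _ ≤ (∫ x in Ioc b 0, ‖f' x‖ ^ 2) + 2 * √S * √R := by
          gcongr
          rwa [div_le_iff₀ (neg_pos.2 hb), mul_comm]
  have hlim := le_of_tendsto_of_tendsto (tendsto_setIntegral_Ioc_inv_self hint)
    ((tendsto_setIntegral_Ioc_zero hf'2).add_const _) htrunc
  rw [zero_add] at hlim
  exact le_four_mul_of_le_two_mul_sqrt_mul_sqrt hS hR hlim

theorem stmt_13_general (f f' : ℝ → ℂ)
    (hderiv : ∀ x : ℝ, HasDerivAt f (f' x) x)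
    (hf' : MemLp f' 2 (volume : Measure ℝ))
    (h0 : f 0 = 0) :
    ∫ x in Set.Iio (0 : ℝ), ‖f x / (x : ℂ)‖ ^ 2 ≤
      4 * ∫ x in Set.Iio (0 : ℝ), ‖f' x‖ ^ 2 := by
  simpa only [norm_div, Complex.norm_real, Real.norm_eq_abs] using
    integral_Iio_sq_norm_div_abs_le_four_mul hderiv hf' h0

/-- Hardy's inequality on the half-line: if `f : ℝ → ℂ` is in `H¹(ℝ)` (i.e. `f` is
differentiable with `f, f′ ∈ L²`) and `f 0 = 0`, then
`∫_{−∞}^0 |f(x)/x|² dx ≤ 4 ∫_{−∞}^0 |f′(x)|² dx`. -/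
theorem stmt_13 (f f' : ℝ → ℂ)
    (hderiv : ∀ x : ℝ, HasDerivAt f (f' x) x)
    (hf : MemLp f 2 (volume : Measure ℝ))
    (hf' : MemLp f' 2 (volume : Measure ℝ))
    (h0 : f 0 = 0) :
    ∫ x in Set.Iio (0 : ℝ), ‖f x / (x : ℂ)‖ ^ 2 ≤
      4 * ∫ x in Set.Iio (0 : ℝ), ‖f' x‖ ^ 2 :=
  stmt_13_general f f' hderiv hf' h0
end

section
/- Let g(z) = ((1−|r^#(z)|²)/(1−|r(z)|²))^{1/2} for z < 0, where r ∈ H¹(ℝ), ‖r‖_{H¹} ≤ λ, ‖r‖_∞ ≤ ρ < 1, and r^#(z) = r(0)/(1+iz). Then ‖g − 1‖_{L²((−∞,0])} ≤ λ/√(1−ρ). -/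
/-!
Pointwise, `(√q - 1)² ≤ |q - 1|`, so `(g - 1)²` is at most `(|r^#|² + |r|²) / (1 - ρ)`.
The integral of `|r^#(z)|² = |r(0)|² / (1 + z²)` is `π |r(0)|²`, and `|r(0)|² ≤ ‖r‖²_{H¹}`
because `|r|²` vanishes at infinity and its derivative `2 ⟪r, r'⟫` has integral at most
`‖r‖₂² + ‖r'‖₂²`. Hence `‖g - 1‖₂² ≤ (π + 1) λ² / (1 - ρ)`.
-/

open MeasureTheory

open Real Set Filter Topology

theorem sq_norm_le_integral_sq_norm_add_integral_sq_norm_deriv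
    {E : Type*} [NormedAddCommGroup E] [InnerProductSpace ℝ E]
    {f f' : ℝ → E} (hf : ∀ x, HasDerivAt f (f' x) x)
    (hf2 : MemLp f 2 volume) (hf'2 : MemLp f' 2 volume) (x₀ : ℝ) :
    ‖f x₀‖ ^ 2 ≤ (∫ x, ‖f x‖ ^ 2) + ∫ x, ‖f' x‖ ^ 2 := by
  have hfI : Integrable (fun x => ‖f x‖ ^ 2) := hf2.integrable_norm_pow two_ne_zero
  have hf'I : Integrable (fun x => ‖f' x‖ ^ 2) := hf'2.integrable_norm_pow two_ne_zero
  set F' : ℝ → ℝ := fun x => 2 * inner ℝ (f x) (f' x)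
  have hF : ∀ x, HasDerivAt (‖f ·‖ ^ 2) (F' x) x := fun x => (hf x).norm_sq
  have hF'_le : ∀ x, ‖F' x‖ ≤ ‖f x‖ ^ 2 + ‖f' x‖ ^ 2 := fun x =>
    calc ‖F' x‖ = 2 * |inner ℝ (f x) (f' x)| := by simp [F']
      _ ≤ 2 * ‖f x‖ * ‖f' x‖ := by
        rw [mul_assoc]; gcongr; exact abs_real_inner_le_norm _ _
      _ ≤ ‖f x‖ ^ 2 + ‖f' x‖ ^ 2 := two_mul_le_add_sq _ _
  have hfc : Continuous f := continuous_iff_continuousAt.2 fun x => (hf x).continuousAt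
  have hF'I : Integrable F' :=
    (hfI.add hf'I).mono' ((hfc.aestronglyMeasurable.inner hf'2.1).const_mul 2)
      (ae_of_all _ hF'_le)
  have hlim : Tendsto (‖f ·‖ ^ 2) atTop (𝓝 0) :=
    tendsto_zero_of_hasDerivAt_of_integrableOn_Ioi (a := x₀) (fun x _ => hF x)
      hF'I.integrableOn hfI.integrableOn
  have hFTC : ∫ x in Ioi x₀, F' x = 0 - ‖f x₀‖ ^ 2 :=
    integral_Ioi_of_hasDerivAt_of_tendsto' (fun x _ => hF x) hF'I.integrableOn hlim
  calc ‖f x₀‖ ^ 2 = -∫ x in Ioi x₀, F' x := by rw [hFTC]; ring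
    _ ≤ ∫ x in Ioi x₀, ‖F' x‖ :=
        (le_norm_self _).trans ((norm_neg _).trans_le (norm_integral_le_integral_norm _))
    _ ≤ ∫ x, ‖F' x‖ := setIntegral_le_integral hF'I.norm (ae_of_all _ fun _ => norm_nonneg _)
    _ ≤ ∫ x, (‖f x‖ ^ 2 + ‖f' x‖ ^ 2) := integral_mono hF'I.norm (hfI.add hf'I) hF'_le
    _ = (∫ x, ‖f x‖ ^ 2) + ∫ x, ‖f' x‖ ^ 2 := integral_add hfI hf'I

theorem sq_sqrt_sub_one_le_abs_sub_one {q : ℝ} (hq : 0 ≤ q) : (√q - 1) ^ 2 ≤ |q - 1| := by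
  obtain ⟨g, hg, rfl⟩ : ∃ g, 0 ≤ g ∧ q = g ^ 2 := ⟨√q, sqrt_nonneg q, (sq_sqrt hq).symm⟩
  calc (√(g ^ 2) - 1) ^ 2 = |g - 1| * |g - 1| := by rw [sqrt_sq hg, ← sq, sq_abs]
    _ ≤ |g - 1| * (g + 1) := by gcongr; exact abs_le.2 ⟨by linarith, by linarith⟩
    _ = |g ^ 2 - 1| := by rw [← abs_of_nonneg (by linarith : 0 ≤ g + 1), ← abs_mul]; ring_nf

theorem sq_sqrt_one_sub_div_one_sub_sub_one_le {a b ρ : ℝ} (ha0 : 0 ≤ a) (ha1 : a ≤ 1)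
    (hb0 : 0 ≤ b) (hb : b ≤ ρ) (hρ : ρ < 1) :
    (√((1 - a) / (1 - b)) - 1) ^ 2 ≤ (a + b) / (1 - ρ) := by
  have hb1 : 0 < 1 - b := by linarith
  calc (√((1 - a) / (1 - b)) - 1) ^ 2 ≤ |(1 - a) / (1 - b) - 1| :=
        sq_sqrt_sub_one_le_abs_sub_one (div_nonneg (by linarith) hb1.le)
    _ = |b - a| / (1 - b) := by
        rw [div_sub_one hb1.ne', abs_div, abs_of_pos hb1]; ring_nf
    _ ≤ (a + b) / (1 - ρ) :=
        div_le_div₀ (by linarith) (abs_le.2 ⟨by linarith, by linarith⟩) (by linarith)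
          (by linarith)

theorem sq_norm_div_one_add_I_mul (w : ℂ) (z : ℝ) :
    ‖w / (1 + Complex.I * z)‖ ^ 2 = ‖w‖ ^ 2 * (1 + z ^ 2)⁻¹ := by
  have h : ‖1 + Complex.I * z‖ ^ 2 = 1 + z ^ 2 := by
    rw [Complex.sq_norm, Complex.normSq_apply]; simp [sq]
  rw [norm_div, div_pow, h, div_eq_mul_inv]

theorem integrable_sq_norm_div_one_add_I_mul (w : ℂ) :
    Integrable fun z : ℝ => ‖w / (1 + Complex.I * z)‖ ^ 2 := by
  simpa only [sq_norm_div_one_add_I_mul] using integrable_inv_one_add_sq.const_mul _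

theorem integral_sq_norm_div_one_add_I_mul (w : ℂ) :
    ∫ z : ℝ, ‖w / (1 + Complex.I * z)‖ ^ 2 = π * ‖w‖ ^ 2 := by
  simp only [sq_norm_div_one_add_I_mul, integral_const_mul, integral_univ_inv_one_add_sq,
    mul_comm]

theorem setIntegral_sq_sqrt_sub_one_le {r : ℝ → ℂ} {ρ : ℝ} (hr : MemLp r 2 volume)
    (hρ : ∀ x, ‖r x‖ ≤ ρ) (hρ1 : ρ < 1) (s : Set ℝ) :
    ∫ z in s, (√((1 - ‖r 0 / (1 + Complex.I * z)‖ ^ 2) / (1 - ‖r z‖ ^ 2)) - 1) ^ 2 ≤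
      (π * ‖r 0‖ ^ 2 + ∫ x, ‖r x‖ ^ 2) / (1 - ρ) := by
  have hsq : ∀ x, ‖r x‖ ^ 2 ≤ ρ := fun x => by nlinarith [hρ x, norm_nonneg (r x)]
  have ha : ∀ z : ℝ, ‖r 0 / (1 + Complex.I * z)‖ ^ 2 ≤ 1 := fun z => by
    rw [sq_norm_div_one_add_I_mul]
    have : (1 + z ^ 2)⁻¹ ≤ 1 := inv_le_one_of_one_le₀ (by nlinarith [sq_nonneg z])
    nlinarith [hsq 0, sq_nonneg ‖r 0‖]
  have hI : Integrable fun z : ℝ => ‖r 0 / (1 + Complex.I * z)‖ ^ 2 + ‖r z‖ ^ 2 :=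
    (integrable_sq_norm_div_one_add_I_mul _).add (hr.integrable_norm_pow two_ne_zero)
  calc _ ≤ ∫ (z : ℝ) in s, (‖r 0 / (1 + Complex.I * z)‖ ^ 2 + ‖r z‖ ^ 2) / (1 - ρ) :=
        integral_mono_of_nonneg (ae_of_all _ fun _ => sq_nonneg _) (hI.div_const _).integrableOn
          (ae_of_all _ fun z => sq_sqrt_one_sub_div_one_sub_sub_one_le (sq_nonneg _) (ha z)
            (sq_nonneg _) (hsq z) hρ1)
    _ ≤ ∫ (z : ℝ), (‖r 0 / (1 + Complex.I * z)‖ ^ 2 + ‖r z‖ ^ 2) / (1 - ρ) :=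
        setIntegral_le_integral (hI.div_const _)
          (ae_of_all _ fun _ => div_nonneg (by positivity) (by linarith))
    _ = (π * ‖r 0‖ ^ 2 + ∫ x, ‖r x‖ ^ 2) / (1 - ρ) := by
        rw [integral_div, integral_add (integrable_sq_norm_div_one_add_I_mul _)
          (hr.integrable_norm_pow two_ne_zero), integral_sq_norm_div_one_add_I_mul]

/-- Let `g(z) = ((1−|r^#(z)|²)/(1−|r(z)|²))^{1/2}` for `z < 0`, where `r ∈ H¹(ℝ)`,
`‖r‖_{H¹} ≤ λ`, `‖r‖_∞ ≤ ρ < 1`, and `r^#(z) = r(0)/(1+iz)`.  Then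
`‖g − 1‖_{L²((−∞,0])} ≤ cλ/√(1−ρ)` for an absolute constant `c`. -/
theorem stmt_15 : ∃ c : ℝ, 0 < c ∧
    ∀ (r r' : ℝ → ℂ) (lam ρ : ℝ),
      (∀ x : ℝ, HasDerivAt r (r' x) x) →
      MemLp r 2 (volume : Measure ℝ) →
      MemLp r' 2 (volume : Measure ℝ) →
      Real.sqrt ((∫ x : ℝ, ‖r x‖ ^ 2) + ∫ x : ℝ, ‖r' x‖ ^ 2) ≤ lam →
      (∀ x : ℝ, ‖r x‖ ≤ ρ) → ρ < 1 →
      Real.sqrt (∫ z in Set.Iio (0 : ℝ),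
          (Real.sqrt ((1 - ‖r 0 / (1 + Complex.I * z)‖ ^ 2) / (1 - ‖r z‖ ^ 2)) - 1) ^ 2) ≤
        c * lam / Real.sqrt (1 - ρ) := by
  refine ⟨3, by norm_num, fun r r' lam ρ hd hr hr' hlam hρ hρ1 => ?_⟩
  obtain ⟨hlam0, hH1⟩ := sqrt_le_iff.1 hlam
  have hr0 := sq_norm_le_integral_sq_norm_add_integral_sq_norm_deriv hd hr hr' 0
  have hr'0 : 0 ≤ ∫ x, ‖r' x‖ ^ 2 := integral_nonneg fun _ => sq_nonneg _
  have hbound : π * ‖r 0‖ ^ 2 + ∫ x, ‖r x‖ ^ 2 ≤ 9 * lam ^ 2 := by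
    nlinarith [pi_pos, pi_le_four, sq_nonneg ‖r 0‖]
  have h1ρ : 0 < 1 - ρ := by linarith
  refine sqrt_le_iff.2 ⟨by positivity, ?_⟩
  calc _ ≤ (π * ‖r 0‖ ^ 2 + ∫ x, ‖r x‖ ^ 2) / (1 - ρ) :=
        setIntegral_sq_sqrt_sub_one_le hr hρ hρ1 _
    _ ≤ 9 * lam ^ 2 / (1 - ρ) := by gcongr
    _ = (3 * lam / √(1 - ρ)) ^ 2 := by rw [div_pow, sq_sqrt h1ρ.le]; ring
end
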